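/- Let k be an even integer and let F : ℍ₂ → ℂ be continuous with F|_k γ = F for all γ ∈ Γ₂ = Sp₂(ℤ). Suppose F has an absolutely convergent Fourier expansion F(X + iY) = Σ_N A(N, Y) e^{2πi tr(NX)}, where N runs over half-integral symmetric matrices N = [[n, r/2],[r/2, m]] (n, r, m ∈ ℤ) and Y runs over real symmetric positive definite 2×2 matrices; extend A by A(M, Y) := 0 whenever the symmetric matrix M is not half-integral. Then F|T_p• = F|T_p_• for every prime p if and only if for every prime p, every half-integral N = [[n, r/2],[r/2, m]], and every positive definite Y = [[y₁, y₂],[y₂, y₃]] with y₁y₃ > p·y₂²: p^{k−1}·A([[n/p, r/(2p)],[r/(2p), m]], [[p·y₁, p·y₂],[p·y₂, y₃]]) + A([[p·n, r/2],[r/2, m]], [[y₁/p, y₂],[y₂, y₃]]) = p^{k−1}·A([[n, r/(2p)],[r/(2p), m/p]], [[y₁, p·y₂],[p·y₂, p·y₃]]) + A([[n, r/2],[r/2, p·m]], [[y₁, y₂],[y₂, y₃/p]]). -/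

import Mathlib

open Matrix Complex Filter Topology

noncomputable section

abbrev M2C := Matrix (Fin 2) (Fin 2) ℂ
abbrev M2R := Matrix (Fin 2) (Fin 2) ℝ
abbrev M2Q := Matrix (Fin 2) (Fin 2) ℚ
abbrev M4R := Matrix (Fin 2 ⊕ Fin 2) (Fin 2 ⊕ Fin 2) ℝ

/-- The standard symplectic form of degree 2. -/
def J4 : M4R := Matrix.fromBlocks 0 1 (-1) 0

/-- `g` is a real symplectic matrix of degree 2. -/
def IsSymplectic (g : M4R) : Prop := gᵀ * J4 * g = J4

/-- all entries of `g` are integers -/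
def IsIntegral4 (g : M4R) : Prop := ∀ i j, ∃ n : ℤ, g i j = (n : ℝ)

/-- The Siegel modular group `Γ₂ = Sp₂(ℤ)` (as a set of real matrices). -/
def Sp2Z : Set M4R := {g | IsSymplectic g ∧ IsIntegral4 g}

/-- `Γ_{2,0}`: elements of `Γ₂` whose lower-left 2×2 block is `0`. -/
def Gamma20 : Set M4R := {g | g ∈ Sp2Z ∧ Matrix.toBlocks₂₁ g = 0}

/-- entrywise coercion of a real 4×4 matrix to a complex one -/
def mapC (g : M4R) : Matrix (Fin 2 ⊕ Fin 2) (Fin 2 ⊕ Fin 2) ℂ := g.map (fun x => (x : ℂ))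

/-- The action `g(Z) = (AZ+B)(CZ+D)⁻¹` of `Sp₂(ℝ)` on the Siegel upper half space. -/
def smul4 (g : M4R) (Z : M2C) : M2C :=
  ((mapC g).toBlocks₁₁ * Z + (mapC g).toBlocks₁₂) * ((mapC g).toBlocks₂₁ * Z + (mapC g).toBlocks₂₂)⁻¹

/-- The factor of automorphy `j(g,Z) = det (CZ + D)`. -/
def jfac (g : M4R) (Z : M2C) : ℂ := ((mapC g).toBlocks₂₁ * Z + (mapC g).toBlocks₂₂).det

/-- entrywise imaginary part -/
def ImM (Z : M2C) : M2R := Z.map Complex.im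

/-- The Siegel upper half space of degree 2. -/
def SiegelH2 : Set M2C := {Z | Z.IsSymm ∧ (ImM Z).PosDef}

/-- `δ(Z) := det (Im Z)` -/
def Hdelta (Z : M2C) : ℝ := (ImM Z).det

/-- The summand `j(g,Z)^{-k} δ(g(Z))^s` of the Siegel Eisenstein series. -/
def eisSummand (k : ℤ) (s : ℂ) (g : M4R) (Z : M2C) : ℂ :=
  jfac g Z ^ (-k) * ((Hdelta (smul4 g Z) : ℂ)) ^ s

/-- `Γ = SL₂(ℤ)` as a set of real 2×2 matrices. -/
def SL2Zset : Set M2R := {g | g.det = 1 ∧ ∀ i j, ∃ n : ℤ, g i j = (n : ℝ)}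

/-- `Γ_∞`: upper triangular elements of `SL₂(ℤ)`. -/
def GammaInf : Set M2R := {g | g ∈ SL2Zset ∧ g 1 0 = 0}

/-- The embedding `(A,B) ↦ A × B` of pairs of 2×2 matrices into 4×4 matrices. -/
def emb (A B : M2R) : M4R :=
  Matrix.fromBlocks !![A 0 0, 0; 0, B 0 0] !![A 0 1, 0; 0, B 0 1]
                    !![A 1 0, 0; 0, B 1 0] !![A 1 1, 0; 0, B 1 1]

/-- `g• := g × 1` -/
def embUp (A : M2R) : M4R := emb A 1

/-- `g_• := 1 × g` -/
def embLow (B : M2R) : M4R := emb 1 B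

/-- `χ_{k,s}(g,Z) = j(g,Z)^{-k} |j(g,Z)|^{-2s}` -/
def chiF (k : ℤ) (s : ℂ) (g : M4R) (Z : M2C) : ℂ :=
  jfac g Z ^ (-k) * ((‖jfac g Z‖ : ℂ)) ^ (-(2 * s))

/-- `φ(Z) = τ + 2z + τ'` -/
def phiF (Z : M2C) : ℂ := Z 0 0 + 2 * Z 0 1 + Z 1 1

/-- `Φ_{k,s}(Z) = φ(Z)^{-k} |φ(Z)|^{-2s}` -/
def PhiF (k : ℤ) (s : ℂ) (Z : M2C) : ℂ :=
  phiF Z ^ (-k) * ((‖phiF Z‖ : ℂ)) ^ (-(2 * s))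

/-- The Petersson slash operator `(F|_k g)(Z) = j(g,Z)^{-k} F(g(Z))`. -/
def slashOp (k : ℤ) (g : M4R) (F : M2C → ℂ) (Z : M2C) : ℂ := jfac g Z ^ (-k) * F (smul4 g Z)

/-- The Siegel modular group as a type. -/
def Sp2ZT := {g : M4R // g ∈ Sp2Z}

/-- the left coset relation for `Γ_{2,0} \ Γ₂` -/
def rel20 (g g' : Sp2ZT) : Prop := ∃ γ ∈ Gamma20, g'.1 = γ * g.1

/-- `SL₂(ℤ)` as a type. -/
def SL2ZT := {g : M2R // g ∈ SL2Zset}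

/-- the left coset relation for `Γ_∞ \ Γ` -/
def relInf (g g' : SL2ZT) : Prop := ∃ γ ∈ GammaInf, g'.1 = γ * g.1

/-- a choice of representative of an equivalence class -/
def qout {α : Sort*} {r : α → α → Prop} (q : Quot r) : α := Classical.choose (Quot.exists_rep q)

/-- The real analytic Siegel Eisenstein series of degree 2:
`E_k^{(2)}(Z,s) = Σ_{g ∈ Γ_{2,0}\Γ₂} j(g,Z)^{-k} δ(g(Z))^s`. -/
def Eis (k : ℤ) (s : ℂ) (Z : M2C) : ℂ := ∑' q : Quot rel20, eisSummand k s (qout q).1 Z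

/-- `B_k(Z,s) = δ(Z)^s Σ_{g ∈ Γ} Φ_{k,s}(g_•(Z)) χ_{k,s}(g_•,Z)` -/
def Bk (k : ℤ) (s : ℂ) (W : M2C) : ℂ :=
  ((Hdelta W : ℂ)) ^ s * ∑' g : SL2ZT, PhiF k s (smul4 (embLow g.1) W) * chiF k s (embLow g.1) W

/-- `A_k(Z,s) = δ(Z)^s Σ_{g,h ∈ Γ_∞\Γ} χ_{k,s}(g• h_•, Z)` -/
def Ak (k : ℤ) (s : ℂ) (Z : M2C) : ℂ :=
  ((Hdelta Z : ℂ)) ^ s *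
    ∑' q : Quot relInf × Quot relInf, chiF k s (embUp (qout q.1).1 * embLow (qout q.2).1) Z

/-- The normalized Hecke operator `T_p` applied via the upper embedding `•`. -/
def TpUp (k : ℤ) (p : ℕ) (F : M2C → ℂ) (Z : M2C) : ℂ :=
  (p : ℂ) ^ ((k : ℂ) / 2 - 1) *
    (slashOp k (embUp (((p : ℝ) ^ (-(1:ℝ)/2)) • !![(p:ℝ), 0; 0, 1])) F Z +
      ∑ a : Fin p, slashOp k (embUp (((p : ℝ) ^ (-(1:ℝ)/2)) • !![1, ((a:ℕ):ℝ); 0, (p:ℝ)])) F Z)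

/-- The normalized Hecke operator `T_p` applied via the lower embedding `_•`. -/
def TpLow (k : ℤ) (p : ℕ) (F : M2C → ℂ) (Z : M2C) : ℂ :=
  (p : ℂ) ^ ((k : ℂ) / 2 - 1) *
    (slashOp k (embLow (((p : ℝ) ^ (-(1:ℝ)/2)) • !![(p:ℝ), 0; 0, 1])) F Z +
      ∑ a : Fin p, slashOp k (embLow (((p : ℝ) ^ (-(1:ℝ)/2)) • !![1, ((a:ℕ):ℝ); 0, (p:ℝ)])) F Z)

/-- `SL₂(ℤ)` as a set of rational matrices. -/
def SL2Qint : Set M2Q := {g | g.det = 1 ∧ ∀ i j, ∃ n : ℤ, g i j = (n : ℚ)}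

/-- the left coset `Γ g` in `GL₂(ℚ)` -/
def leftCosetQ (g : M2Q) : Set M2Q := {x | ∃ γ ∈ SL2Qint, x = γ * g}

/-- the double coset `Γ g Γ` in `GL₂(ℚ)` -/
def doubleCosetQ (g : M2Q) : Set M2Q := {x | ∃ γ₁ ∈ SL2Qint, ∃ γ₂ ∈ SL2Qint, x = γ₁ * g * γ₂}

/-- `d_m = [[m,0],[0,m⁻¹]]` -/
def dmQ (m : ℕ) : M2Q := !![(m:ℚ), 0; 0, (m:ℚ)⁻¹]

/-- entrywise coercion `ℚ → ℝ` -/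
def mapR (g : M2Q) : M2R := g.map (fun x => (x : ℝ))

/-- `γ 0, …, γ (r-1)` is a system of representatives for the left cosets of `Γ`
contained in the double coset `Γ d_m Γ`. -/
def IsRepSystem (m : ℕ) (r : ℕ) (γ : Fin r → M2Q) : Prop :=
  (∀ j, γ j ∈ doubleCosetQ (dmQ m)) ∧
  (⋃ j, leftCosetQ (γ j)) = doubleCosetQ (dmQ m) ∧
  (∀ j j', j ≠ j' → Disjoint (leftCosetQ (γ j)) (leftCosetQ (γ j')))

/-- the matrices `g_m` -/
def gmMat (m : ℕ) : M4R :=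
  Matrix.fromBlocks !![0,0;0,1] !![-1,0;0,0] !![1,(m:ℝ);0,0] !![0,0;-(m:ℝ),1]

/-- `J_m = [[0,1/m],[m,0]]` -/
def JmMat (m : ℕ) : M2R := !![0, 1/(m:ℝ); (m:ℝ), 0]

/-- `Γ(m) = {g ∈ Γ : J_m g J_m ∈ Γ}` -/
def GammaM (m : ℕ) : Set M2R := {g | g ∈ SL2Zset ∧ JmMat m * g * JmMat m ∈ SL2Zset}

/-- the left coset `Γ_{2,0} x` -/
def C20 (x : M4R) : Set M4R := {y | ∃ γ ∈ Gamma20, y = γ * x}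

/-- `g^# = [[d,b],[c,a]]` -/
def sharp (g : M2R) : M2R := !![g 1 1, g 0 1; g 1 0, g 0 0]

/-- half-integral symmetric matrix `[[n, r/2],[r/2, m]]` -/
def halfIntMat (n r m : ℤ) : M2R := !![(n:ℝ), (r:ℝ)/2; (r:ℝ)/2, (m:ℝ)]

def IsHalfIntegral (M : M2R) : Prop := ∃ n r m : ℤ, M = halfIntMat n r m

/-- `Z = X + iY` -/
def mkZ (X Y : M2R) : M2C := X.map (fun x => (x:ℂ)) + Complex.I • Y.map (fun x => (x:ℂ))

/-- `j([[a,b],[c,d]], τ) = cτ + d` on the upper half plane -/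
def jSL (g : M2R) (τ : ℂ) : ℂ := (g 1 0 : ℝ) * τ + ((g 1 1 : ℝ) : ℂ)

/-- the Möbius action of `GL₂⁺(ℝ)` on the upper half plane -/
def moeb (g : M2R) (τ : ℂ) : ℂ := (((g 0 0 : ℝ) : ℂ) * τ + ((g 0 1 : ℝ) : ℂ)) / (((g 1 0 : ℝ) : ℂ) * τ + ((g 1 1 : ℝ) : ℂ))

/-- the degree 1 real analytic Eisenstein series `E_k(τ,s) = Σ_{g ∈ Γ_∞\Γ} j(g,τ)^{-k} Im(g(τ))^s` -/
def E1 (k : ℤ) (s : ℂ) (τ : ℂ) : ℂ :=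
  ∑' q : Quot relInf, jSL (qout q).1 τ ^ (-k) * ((((moeb (qout q).1 τ).im : ℝ) : ℂ)) ^ s


/-!
Write `Z = [[τ, √p z], [√p z, τ']]`. Then `(F|T_p•)(Z)` is
`p^{k-1} F([[pτ, pz], [pz, τ']]) + p⁻¹ ∑_a F([[(τ + a)/p, z], [z, τ']])`, and both pieces are
again absolutely convergent series in `e(n x₁ + r x₂ + m x₃)`: the first one by reindexing
`(n, r, m) ↦ (pn, pr, m)` (the coefficients off this image vanish, not being half-integral), the
second one because averaging over `a` keeps exactly the terms with `p ∣ n`. The lower embedding is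
the upper one conjugated by `τ ↔ τ'`. Since the coefficients of an absolutely convergent Fourier
series on `ℤ³` are unique (integrate one variable at a time over `[0, 1]`), `F|T_p• = F|T_p_•`
holds if and only if the two coefficient families agree.
-/

open Real

/-! ### Uniqueness of absolutely convergent Fourier expansions -/

def SummablyIndependent {β X : Type*} (χ : β → X → ℂ) : Prop :=
  ∀ d : β → ℂ, Summable (fun b => ‖d b‖) → (∀ x, HasSum (fun b => d b * χ b x) 0) → ∀ b, d b = 0

lemma norm_exp_two_pi_I_mul_intCast_mul (n : ℤ) (x : ℝ) : ‖exp (2 * π * I * n * x)‖ = 1 := by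
  simp [Complex.norm_exp]

lemma integral_exp_two_pi_I_intCast_mul (n : ℤ) :
    ∫ x in Set.Ioc (0 : ℝ) 1, exp (2 * π * I * n * x) = if n = 0 then 1 else 0 := by
  rw [← intervalIntegral.integral_of_le zero_le_one]
  split_ifs with hn
  · simp [hn]
  have hc : 2 * π * I * n ≠ 0 := by simp [hn, Real.pi_ne_zero, I_ne_zero]
  rw [integral_exp_mul_complex hc, ofReal_one, mul_one, ofReal_zero, mul_zero, Complex.exp_zero,
    show 2 * π * I * n = n * (2 * π * I) by ring, exp_int_mul_two_pi_mul_I, sub_self, zero_div]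

theorem summablyIndependent_fourier :
    SummablyIndependent (fun (n : ℤ) (x : ℝ) => exp (2 * π * I * n * x)) := by
  intro c hc h n₀
  let f : ℤ → ℝ → ℂ := fun n x => c n * exp (2 * π * I * ((n - n₀ : ℤ) : ℂ) * x)
  have hf_sum : ∀ x, HasSum (fun n => f n x) 0 := fun x => by
    have := (h x).mul_right (exp (-(2 * π * I * n₀ * x)))
    rw [zero_mul] at this
    refine this.congr_fun fun n => ?_
    simp only [f, mul_assoc, ← Complex.exp_add]
    push_cast
    ring_nf
  have key := MeasureTheory.hasSum_integral_of_summable_integral_norm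
    (μ := MeasureTheory.volume.restrict (Set.Ioc (0 : ℝ) 1))
    (fun n => (by fun_prop : Continuous (f n)).integrableOn_Ioc)
    (by simpa only [f, norm_mul, norm_exp_two_pi_I_mul_intCast_mul, mul_one,
      MeasureTheory.integral_const, MeasureTheory.measureReal_restrict_apply_univ,
      Real.volume_real_Ioc, sub_zero, max_eq_left zero_le_one, one_smul] using hc)
  simp only [f, MeasureTheory.integral_const_mul, integral_exp_two_pi_I_intCast_mul, sub_eq_zero,
    mul_ite, mul_one, mul_zero, (hf_sum _).tsum_eq, MeasureTheory.integral_zero] at key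
  simpa using (key.unique (hasSum_single n₀ fun n hn => if_neg hn)).symm

theorem SummablyIndependent.prod {α β X Y : Type*} {ψ : α → X → ℂ} {χ : β → Y → ℂ}
    (hψ : SummablyIndependent ψ) (hχ : SummablyIndependent χ) (hχ_le : ∀ b y, ‖χ b y‖ ≤ 1) :
    SummablyIndependent (fun (v : α × β) (z : X × Y) => ψ v.1 z.1 * χ v.2 z.2) := by
  intro d hd h ⟨a, b⟩
  have hle : ∀ a b y, ‖d (a, b) * χ b y‖ ≤ ‖d (a, b)‖ := fun a b y => by
    simpa [norm_mul] using mul_le_mul_of_nonneg_left (hχ_le b y) (norm_nonneg (d (a, b)))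
  have hfiber : ∀ a y, Summable (fun b => d (a, b) * χ b y) := fun a y =>
    (hd.prod_factor a).of_norm_bounded (hle a · y)
  have hrow : ∀ y a, ∑' b, d (a, b) * χ b y = 0 := fun y => by
    refine hψ _ (hd.prod.of_nonneg_of_le (fun _ => norm_nonneg _) fun a => ?_) fun x => ?_
    · exact (norm_tsum_le_tsum_norm (hfiber a y).norm).trans
        ((hfiber a y).norm.tsum_le_tsum (hle a · y) (hd.prod_factor a))
    · refine (h (x, y)).prod_fiberwise fun a => ?_
      exact ((hfiber a y).hasSum.mul_right (ψ a x)).congr_fun fun b => by ring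
  exact hχ (fun b => d (a, b)) (hd.prod_factor a) (fun y => hrow y a ▸ (hfiber a y).hasSum) b

def phase (v : ℤ × ℤ × ℤ) (x₁ x₂ x₃ : ℝ) : ℂ :=
  exp (2 * π * I * (v.1 * x₁ + v.2.1 * x₂ + v.2.2 * x₃))

theorem summablyIndependent_phase :
    SummablyIndependent (fun v (x : ℝ × ℝ × ℝ) => phase v x.1 x.2.1 x.2.2) := by
  have h1 := norm_exp_two_pi_I_mul_intCast_mul
  have h := summablyIndependent_fourier.prod
    (summablyIndependent_fourier.prod summablyIndependent_fourier fun n x => (h1 n x).le)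
    fun v x => by simp [h1]
  intro d hd hsum
  refine h d hd fun x => (hsum x).congr_fun fun v => ?_
  simp only [phase, ← Complex.exp_add]
  ring_nf

/-! ### Symmetric `2 × 2` matrices and the Siegel upper half-space -/

lemma posDef_fin_two_iff {a b c : ℝ} : (!![a, b; b, c] : M2R).PosDef ↔ 0 < a ∧ b ^ 2 < a * c := by
  constructor
  · intro h
    have ha := h.dotProduct_mulVec_pos (x := ![1, 0]) (by simp)
    have hdet := h.det_pos
    simp [dotProduct, mulVec, Fin.sum_univ_two, det_fin_two_of] at ha hdet
    exact ⟨ha, by nlinarith⟩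
  · rintro ⟨ha, hb⟩
    refine posDef_iff_dotProduct_mulVec.2 ⟨by ext i j; fin_cases i <;> fin_cases j <;> rfl,
      fun x hx => ?_⟩
    simp only [star_trivial, dotProduct, mulVec, Fin.sum_univ_two, of_apply, cons_val',
      cons_val_zero, cons_val_one, empty_val', cons_val_fin_one]
    by_cases h1 : x 1 = 0
    · have h0 : x 0 ≠ 0 := fun h0 => hx (funext fun i => by fin_cases i <;> simp [h0, h1])
      simp only [h1, mul_zero, add_zero, zero_mul]
      nlinarith [sq_pos_of_ne_zero h0]
    · have hQ : 0 < a * (x 0 * (a * x 0 + b * x 1) + x 1 * (b * x 0 + c * x 1)) := by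
        nlinarith [sq_pos_of_ne_zero h1, sq_nonneg (a * x 0 + b * x 1)]
      exact pos_of_mul_pos_right hQ ha.le

lemma isSymm_of_fin_two {α : Type*} (a b c : α) : (!![a, b; b, c]).IsSymm := by
  ext i j; fin_cases i <;> fin_cases j <;> rfl

lemma mkZ_of (a b c d e f g h : ℝ) :
    mkZ !![a, b; c, d] !![e, f; g, h] = !![a + e * I, b + f * I; c + g * I, d + h * I] := by
  ext i j; fin_cases i <;> fin_cases j <;> simp [mkZ, mul_comm]

def swap2 {α : Type*} (M : Matrix (Fin 2) (Fin 2) α) : Matrix (Fin 2) (Fin 2) α :=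
  M.submatrix (Equiv.swap 0 1) (Equiv.swap 0 1)

@[simp]
lemma swap2_of {α : Type*} (a b c d : α) : swap2 !![a, b; c, d] = !![d, c; b, a] := by
  ext i j; fin_cases i <;> fin_cases j <;> rfl

@[simp]
lemma swap2_swap2 {α : Type*} (M : Matrix (Fin 2) (Fin 2) α) : swap2 (swap2 M) = M := by
  ext i j; simp [swap2]

lemma swap2_mkZ (X Y : M2R) : swap2 (mkZ X Y) = mkZ (swap2 X) (swap2 Y) := by
  ext i j; simp [swap2, mkZ]

lemma mkZ_mem_siegelH2 {X Y : M2R} (hX : X.IsSymm) (hY : Y.IsSymm) (hYpd : Y.PosDef) :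
    mkZ X Y ∈ SiegelH2 := by
  refine ⟨?_, ?_⟩
  · ext i j
    simp [mkZ, hX.apply i j, hY.apply i j]
  · convert hYpd
    ext i j
    simp [ImM, mkZ]

lemma posDef_sqrt_mul {p : ℕ} {y₁ y₂ y₃ : ℝ} (hy₁ : 0 < y₁) (hy : (p : ℝ) * y₂ ^ 2 < y₁ * y₃) :
    (!![y₁, √p * y₂; √p * y₂, y₃] : M2R).PosDef :=
  posDef_fin_two_iff.2 ⟨hy₁, by rwa [mul_pow, Real.sq_sqrt (Nat.cast_nonneg p)]⟩

lemma exists_eq_mkZ_sqrt {Z : M2C} (hZ : Z ∈ SiegelH2) {p : ℕ} (hp : 0 < p) :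
    ∃ x₁ x₂ x₃ y₁ y₂ y₃ : ℝ, 0 < y₁ ∧ (p : ℝ) * y₂ ^ 2 < y₁ * y₃ ∧
      Z = mkZ !![x₁, √p * x₂; √p * x₂, x₃] !![y₁, √p * y₂; √p * y₂, y₃] := by
  obtain ⟨hsym, hpd⟩ := hZ
  have hs : √(p : ℝ) ≠ 0 := by positivity
  have hZ10 : Z 1 0 = Z 0 1 := hsym.apply 0 1
  have hIm : ImM Z =
      !![(Z 0 0).im, √p * ((Z 0 1).im / √p); √p * ((Z 0 1).im / √p), (Z 1 1).im] := by
    ext i j; fin_cases i <;> fin_cases j <;> simp [ImM, hZ10, mul_div_cancel₀ _ hs]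
  rw [hIm, posDef_fin_two_iff, mul_pow, Real.sq_sqrt (Nat.cast_nonneg p)] at hpd
  refine ⟨(Z 0 0).re, (Z 0 1).re / √p, (Z 1 1).re, (Z 0 0).im, (Z 0 1).im / √p, (Z 1 1).im,
    hpd.1, hpd.2, ?_⟩
  ext i j; fin_cases i <;> fin_cases j <;> simp [mkZ_of, hZ10, mul_div_cancel₀ _ hs, re_add_im]

/-! ### The Hecke operators in coordinates -/

lemma mapC_emb (A B : M2R) :
    mapC (emb A B) =
      fromBlocks !![(A 0 0 : ℂ), 0; 0, (B 0 0 : ℂ)] !![(A 0 1 : ℂ), 0; 0, (B 0 1 : ℂ)]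
        !![(A 1 0 : ℂ), 0; 0, (B 1 0 : ℂ)] !![(A 1 1 : ℂ), 0; 0, (B 1 1 : ℂ)] := by
  rw [mapC, emb, fromBlocks_map]
  congr 1 <;> ext i j <;> fin_cases i <;> fin_cases j <;> simp

section UpperTriangular

variable {A B : M2R} (hA : A 1 0 = 0) (hB : B 1 0 = 0)
include hA hB

lemma toBlocks₂₁_mapC_emb : (mapC (emb A B)).toBlocks₂₁ = 0 := by
  rw [mapC_emb, toBlocks_fromBlocks₂₁]
  ext i j; fin_cases i <;> fin_cases j <;> simp [hA, hB]

lemma jfac_emb (Z : M2C) : jfac (emb A B) Z = A 1 1 * B 1 1 := by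
  rw [jfac, toBlocks₂₁_mapC_emb hA hB, Matrix.zero_mul, zero_add, mapC_emb, toBlocks_fromBlocks₂₂,
    det_fin_two_of]
  ring

lemma smul4_emb (hdA : A 0 0 * A 1 1 = 1) (hdB : B 0 0 * B 1 1 = 1) (Z : M2C) :
    smul4 (emb A B) Z =
      !![A 0 0 * (A 0 0 * Z 0 0 + A 0 1), A 0 0 * B 0 0 * Z 0 1;
        A 0 0 * B 0 0 * Z 1 0, B 0 0 * (B 0 0 * Z 1 1 + B 0 1)] := by
  have hA' : (A 1 1 : ℂ) * A 0 0 = 1 := by exact_mod_cast (mul_comm _ _).trans hdA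
  have hB' : (B 1 1 : ℂ) * B 0 0 = 1 := by exact_mod_cast (mul_comm _ _).trans hdB
  have hinv : (!![(A 1 1 : ℂ), 0; 0, (B 1 1 : ℂ)])⁻¹ = !![(A 0 0 : ℂ), 0; 0, (B 0 0 : ℂ)] := by
    refine inv_eq_right_inv ?_
    ext i j; fin_cases i <;> fin_cases j <;> simp [hA', hB']
  rw [smul4, toBlocks₂₁_mapC_emb hA hB, Matrix.zero_mul, zero_add, mapC_emb, toBlocks_fromBlocks₁₁,
    toBlocks_fromBlocks₁₂, toBlocks_fromBlocks₂₂, hinv]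
  ext i j; fin_cases i <;> fin_cases j <;>
    simp only [mul_apply, Matrix.add_apply, Fin.sum_univ_two, of_apply, cons_val', cons_val_zero,
      cons_val_one, empty_val', cons_val_fin_one, Fin.isValue, Fin.mk_zero,
      Fin.mk_one] <;> ring

lemma smul4_emb_swap2 (hdA : A 0 0 * A 1 1 = 1) (hdB : B 0 0 * B 1 1 = 1) (Z : M2C) :
    smul4 (emb B A) (swap2 Z) = swap2 (smul4 (emb A B) Z) := by
  rw [smul4_emb hB hA hdB hdA, smul4_emb hA hB hdA hdB, swap2_of]
  ext i j; fin_cases i <;> fin_cases j <;>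
    simp only [swap2, submatrix_apply, of_apply, cons_val', cons_val_zero, cons_val_one, empty_val',
      cons_val_fin_one, Fin.isValue, Fin.zero_eta, Fin.mk_one, Equiv.swap_apply_left,
      Equiv.swap_apply_right] <;> ring

end UpperTriangular

lemma slashOp_embLow {g : M2R} (hg : g 1 0 = 0) (hdg : g 0 0 * g 1 1 = 1) (k : ℤ) (F : M2C → ℂ)
    (Z : M2C) : slashOp k (embLow g) F Z = slashOp k (embUp g) (F ∘ swap2) (swap2 Z) := by
  have h1 : (1 : M2R) 1 0 = 0 := by simp
  have hd1 : (1 : M2R) 0 0 * (1 : M2R) 1 1 = 1 := by simp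
  rw [slashOp, slashOp, embLow, embUp, jfac_emb h1 hg, jfac_emb hg h1, Function.comp_apply,
    smul4_emb_swap2 h1 hg hd1 hdg, swap2_swap2, mul_comm (((1 : M2R) 1 1 : ℝ) : ℂ)]

lemma rpow_neg_half (p : ℕ) : (p : ℝ) ^ (-(1 : ℝ) / 2) = (√p)⁻¹ := by
  rw [neg_div, Real.rpow_neg (Nat.cast_nonneg p), ← Real.sqrt_eq_rpow]

lemma rpow_neg_half_smul_diag (p : ℕ) :
    ((p : ℝ) ^ (-(1 : ℝ) / 2)) • !![(p : ℝ), 0; 0, 1] = !![√p, 0; 0, (√p)⁻¹] := by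
  ext i j; fin_cases i <;> fin_cases j <;> simp [rpow_neg_half, ← div_eq_inv_mul, Real.div_sqrt]

lemma rpow_neg_half_smul_upper (p : ℕ) (a : ℝ) :
    ((p : ℝ) ^ (-(1 : ℝ) / 2)) • !![1, a; 0, (p : ℝ)] = !![(√p)⁻¹, (√p)⁻¹ * a; 0, √p] := by
  ext i j; fin_cases i <;> fin_cases j <;> simp [rpow_neg_half, ← div_eq_inv_mul, Real.div_sqrt]

theorem TpLow_eq_TpUp_comp_swap2 (k : ℤ) {p : ℕ} (hp : 0 < p) (F : M2C → ℂ) (Z : M2C) :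
    TpLow k p F Z = TpUp k p (F ∘ swap2) (swap2 Z) := by
  have hs : √(p : ℝ) ≠ 0 := by positivity
  simp only [TpLow, TpUp, rpow_neg_half_smul_diag, rpow_neg_half_smul_upper]
  rw [slashOp_embLow (g := !![√p, 0; 0, (√p)⁻¹]) (by simp) (by simp [hs]),
    Finset.sum_congr rfl fun (a : Fin p) _ =>
      slashOp_embLow (g := !![(√p)⁻¹, (√p)⁻¹ * a; 0, √p]) (by simp) (by simp [hs]) k F Z]

lemma slashOp_embUp_upperTriangular {a b d : ℝ} (had : a * d = 1) (k : ℤ) (F : M2C → ℂ)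
    (Z : M2C) :
    slashOp k (embUp !![a, b; 0, d]) F Z =
      (d : ℂ) ^ (-k) * F !![a * (a * Z 0 0 + b), a * Z 0 1; a * Z 1 0, Z 1 1] := by
  have h1 : (1 : M2R) 1 0 = 0 := by simp
  have hd1 : (1 : M2R) 0 0 * (1 : M2R) 1 1 = 1 := by simp
  rw [slashOp, embUp, jfac_emb (by simp) h1, smul4_emb (by simp) h1 (by simpa using had) hd1]
  simp

lemma ofReal_sqrt_zpow_two_mul {p : ℕ} (j : ℤ) : ((√p : ℝ) : ℂ) ^ (j + j) = (p : ℂ) ^ j := by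
  rw [← two_mul, _root_.zpow_mul, zpow_ofNat, ← ofReal_pow, Real.sq_sqrt (Nat.cast_nonneg p),
    ofReal_natCast]

theorem TpUp_apply {k : ℤ} (hk : Even k) {p : ℕ} (hp : 0 < p) (F : M2C → ℂ) (Z : M2C) :
    TpUp k p F Z =
      (p : ℂ) ^ (k - 1) * F !![p * Z 0 0, √p * Z 0 1; √p * Z 1 0, Z 1 1] +
        (p : ℂ)⁻¹ * ∑ a : Fin p, F !![(Z 0 0 + a) / p, Z 0 1 / √p; Z 1 0 / √p, Z 1 1] := by
  obtain ⟨j, rfl⟩ := hk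
  have hs : √(p : ℝ) ≠ 0 := by positivity
  have hpC : (p : ℂ) ≠ 0 := by exact_mod_cast hp.ne'
  have hs2 : ((√p : ℝ) : ℂ) * (√p : ℝ) = p := by
    rw [← ofReal_mul, Real.mul_self_sqrt (Nat.cast_nonneg p), ofReal_natCast]
  have hexp : (p : ℂ) ^ (((j + j : ℤ) : ℂ) / 2 - 1) = (p : ℂ) ^ (j - 1) := by
    rw [← Complex.cpow_intCast]; push_cast; ring_nf
  simp only [TpUp, rpow_neg_half_smul_diag, rpow_neg_half_smul_upper,
    slashOp_embUp_upperTriangular (mul_inv_cancel₀ hs), slashOp_embUp_upperTriangular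
      (inv_mul_cancel₀ hs), hexp, ofReal_inv, _root_.inv_zpow', ofReal_sqrt_zpow_two_mul,
    _root_.zpow_neg, ← Finset.mul_sum]
  have hinf : (!![(√p : ℂ) * ((√p : ℂ) * Z 0 0 + ((0 : ℝ) : ℂ)), (√p : ℂ) * Z 0 1;
      (√p : ℂ) * Z 1 0, Z 1 1] : M2C) = !![p * Z 0 0, √p * Z 0 1; √p * Z 1 0, Z 1 1] := by
    rw [ofReal_zero, add_zero, ← mul_assoc, hs2]
  have htr : ∀ a : Fin p,
      (!![((√p : ℝ) : ℂ)⁻¹ * (((√p : ℝ) : ℂ)⁻¹ * Z 0 0 + (((√p)⁻¹ * a : ℝ) : ℂ)),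
        ((√p : ℝ) : ℂ)⁻¹ * Z 0 1; ((√p : ℝ) : ℂ)⁻¹ * Z 1 0, Z 1 1] : M2C) =
      !![(Z 0 0 + a) / p, Z 0 1 / √p; Z 1 0 / √p, Z 1 1] := fun a => by
    rw [← hs2]; push_cast; field_simp
  have hpow : (p : ℂ) ^ (j - 1) * ((p : ℂ) ^ j)⁻¹ = (p : ℂ)⁻¹ := by
    rw [← _root_.zpow_neg, ← zpow_add₀ hpC, show j - 1 + -j = -1 by ring, _root_.zpow_neg_one]
  rw [inv_inv, hinf, Finset.sum_congr rfl fun a _ => congrArg F (htr a), mul_add, ← mul_assoc,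
    ← mul_assoc, hpow, ← zpow_add₀ hpC, show j - 1 + j = j + j - 1 by ring]

theorem TpUp_mkZ {k : ℤ} (hk : Even k) {p : ℕ} (hp : 0 < p) (F : M2C → ℂ) (x₁ x₂ x₃ y₁ y₂ y₃ : ℝ) :
    TpUp k p F (mkZ !![x₁, √p * x₂; √p * x₂, x₃] !![y₁, √p * y₂; √p * y₂, y₃]) =
      (p : ℂ) ^ (k - 1) * F (mkZ !![p * x₁, p * x₂; p * x₂, x₃] !![p * y₁, p * y₂; p * y₂, y₃]) +
        (p : ℂ)⁻¹ * ∑ a : Fin p, F (mkZ !![(x₁ + a) / p, x₂; x₂, x₃] !![y₁ / p, y₂; y₂, y₃]) := by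
  have hs : ((√p : ℝ) : ℂ) * (√p : ℝ) = p := by
    rw [← ofReal_mul, Real.mul_self_sqrt (Nat.cast_nonneg p), ofReal_natCast]
  have hsC : ((√p : ℝ) : ℂ) ≠ 0 := by simp [hp.ne']
  rw [TpUp_apply hk hp]
  simp only [mkZ_of, of_apply, cons_val', cons_val_zero, cons_val_one, empty_val',
    cons_val_fin_one, Fin.isValue]
  congr 3
  · ext i j; fin_cases i <;> fin_cases j <;> simp [← hs] <;> ring
  · ext a; congr 1
    ext i j; fin_cases i <;> fin_cases j <;> simp [mul_assoc, ← mul_add, hsC]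
    ring

/-! ### Fourier expansions of the Hecke translates -/

def HasFourierExpansion (F : M2C → ℂ) (A : M2R → M2R → ℂ) : Prop :=
  ∀ X Y : M2R, X.IsSymm → Y.IsSymm → Y.PosDef →
    HasSum (fun c : ℤ × ℤ × ℤ =>
      A (halfIntMat c.1 c.2.1 c.2.2) Y *
        Complex.exp (2 * (Real.pi : ℂ) * Complex.I *
          ((c.1 : ℂ) * X 0 0 + (c.2.1 : ℂ) * X 0 1 + (c.2.2 : ℂ) * X 1 1)))
      (F (mkZ X Y))

lemma inv_mul_sum_exp_two_pi_I_mul_div {p : ℕ} (hp : 0 < p) (n : ℤ) :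
    (p : ℂ)⁻¹ * ∑ a : Fin p, exp (2 * π * I * n * a / p) = if (p : ℤ) ∣ n then 1 else 0 := by
  have hpC : (p : ℂ) ≠ 0 := by exact_mod_cast hp.ne'
  set ζ := exp (2 * π * I / p)
  have hζ : IsPrimitiveRoot ζ p := Complex.isPrimitiveRoot_exp p hp.ne'
  have hterm : ∀ a : ℕ, exp (2 * π * I * n * a / p) = (ζ ^ n) ^ a := fun a => by
    rw [← zpow_natCast, ← _root_.zpow_mul, ← Complex.exp_int_mul]
    push_cast
    ring_nf
  rw [Fin.sum_univ_eq_sum_range (fun a => exp (2 * π * I * n * a / p)), Finset.sum_congr rfl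
    fun a _ => hterm a]
  split_ifs with hdvd
  · simp [(hζ.zpow_eq_one_iff_dvd n).2 hdvd, hpC]
  · have hne : ζ ^ n ≠ 1 := fun h => hdvd ((hζ.zpow_eq_one_iff_dvd n).1 h)
    rw [geom_sum_eq hne, ← zpow_natCast, ← _root_.zpow_mul, mul_comm n, _root_.zpow_mul,
      zpow_natCast, hζ.pow_eq_one, _root_.one_zpow, sub_self, zero_div, mul_zero]

lemma dvd_of_isHalfIntegral {p : ℕ} (hp : 0 < p) {n r m : ℤ}
    (h : IsHalfIntegral !![(n : ℝ) / p, (r : ℝ) / (2 * p); (r : ℝ) / (2 * p), (m : ℝ)]) :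
    (p : ℤ) ∣ n ∧ (p : ℤ) ∣ r := by
  obtain ⟨a, b, c, h⟩ := h
  have hpR : (p : ℝ) ≠ 0 := by positivity
  have h00 := congrFun (congrFun h 0) 0
  have h01 := congrFun (congrFun h 0) 1
  simp only [halfIntMat, of_apply, cons_val', cons_val_zero, cons_val_one, empty_val',
    cons_val_fin_one, Fin.isValue] at h00 h01
  refine ⟨⟨a, ?_⟩, ⟨b, ?_⟩⟩
  · exact_mod_cast (by field_simp at h00; linarith : (n : ℝ) = p * a)
  · exact_mod_cast (by field_simp at h01; linarith : (r : ℝ) = p * b)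

lemma halfIntMat_mul (p : ℕ) (n r m : ℤ) :
    halfIntMat (p * n) r m = !![(p : ℝ) * n, (r : ℝ) / 2; (r : ℝ) / 2, (m : ℝ)] := by
  simp [halfIntMat]

lemma halfIntMat_eq_div {p : ℕ} (hp : 0 < p) (n r m : ℤ) :
    !![((p * n : ℤ) : ℝ) / p, ((p * r : ℤ) : ℝ) / (2 * p); ((p * r : ℤ) : ℝ) / (2 * p), (m : ℝ)] =
      halfIntMat n r m := by
  have hpR : (p : ℝ) ≠ 0 := by positivity
  ext i j; fin_cases i <;> fin_cases j <;> simp [halfIntMat] <;> field_simp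

lemma injective_mul_fst {p : ℕ} (hp : 0 < p) :
    Function.Injective (Prod.map ((p : ℤ) * ·) (id : ℤ × ℤ → ℤ × ℤ)) :=
  (mul_right_injective₀ (by exact_mod_cast hp.ne')).prodMap Function.injective_id

lemma injective_mul_fst_snd {p : ℕ} (hp : 0 < p) :
    Function.Injective (Prod.map ((p : ℤ) * ·) (Prod.map ((p : ℤ) * ·) (id : ℤ → ℤ))) :=
  (mul_right_injective₀ (by exact_mod_cast hp.ne')).prodMap
    ((mul_right_injective₀ (by exact_mod_cast hp.ne')).prodMap Function.injective_id)

lemma coeff_div_eq_zero {A : M2R → M2R → ℂ} (hA0 : ∀ M Y : M2R, ¬ IsHalfIntegral M → A M Y = 0)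
    {p : ℕ} (hp : 0 < p) (Y : M2R) {v : ℤ × ℤ × ℤ}
    (hv : v ∉ Set.range (Prod.map ((p : ℤ) * ·) (Prod.map ((p : ℤ) * ·) (id : ℤ → ℤ)))) :
    A !![(v.1 : ℝ) / p, (v.2.1 : ℝ) / (2 * p); (v.2.1 : ℝ) / (2 * p), (v.2.2 : ℝ)] Y = 0 := by
  refine hA0 _ _ fun h => hv ?_
  obtain ⟨⟨a, ha⟩, ⟨b, hb⟩⟩ := dvd_of_isHalfIntegral hp h
  exact ⟨(a, b, v.2.2), by simp [← ha, ← hb]⟩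

lemma summable_norm_coeff_div {A : M2R → M2R → ℂ}
    (hA0 : ∀ M Y : M2R, ¬ IsHalfIntegral M → A M Y = 0) {p : ℕ} (hp : 0 < p) {Y : M2R}
    (habs : Summable fun c : ℤ × ℤ × ℤ => ‖A (halfIntMat c.1 c.2.1 c.2.2) Y‖) :
    Summable fun v : ℤ × ℤ × ℤ =>
      ‖A !![(v.1 : ℝ) / p, (v.2.1 : ℝ) / (2 * p); (v.2.1 : ℝ) / (2 * p), (v.2.2 : ℝ)] Y‖ :=
  ((injective_mul_fst_snd hp).summable_iff fun v hv => by
    rw [coeff_div_eq_zero hA0 hp Y hv, norm_zero]).1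
    (habs.congr fun c => by simp only [Function.comp_apply, Prod.map, id, halfIntMat_eq_div hp])

lemma summable_norm_coeff_mul {A : M2R → M2R → ℂ} {p : ℕ} (hp : 0 < p) {Y : M2R}
    (habs : Summable fun c : ℤ × ℤ × ℤ => ‖A (halfIntMat c.1 c.2.1 c.2.2) Y‖) :
    Summable fun v : ℤ × ℤ × ℤ =>
      ‖A !![(p : ℝ) * v.1, (v.2.1 : ℝ) / 2; (v.2.1 : ℝ) / 2, (v.2.2 : ℝ)] Y‖ :=
  (habs.comp_injective (injective_mul_fst hp)).congr fun v => by simp [halfIntMat_mul]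

namespace HasFourierExpansion

variable {F : M2C → ℂ} {A : M2R → M2R → ℂ} (hF : HasFourierExpansion F A)
include hF

lemma hasSum_phase (x₁ x₂ x₃ : ℝ) {Y : M2R} (hYs : Y.IsSymm) (hY : Y.PosDef) :
    HasSum (fun c : ℤ × ℤ × ℤ => A (halfIntMat c.1 c.2.1 c.2.2) Y * phase c x₁ x₂ x₃)
      (F (mkZ !![x₁, x₂; x₂, x₃] Y)) :=
  (hF _ Y (isSymm_of_fin_two x₁ x₂ x₃) hYs hY).congr_fun fun c => by simp [phase]

theorem hasSum_scale (hA0 : ∀ M Y : M2R, ¬ IsHalfIntegral M → A M Y = 0) {p : ℕ} (hp : 0 < p)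
    (x₁ x₂ x₃ : ℝ) {Y : M2R} (hYs : Y.IsSymm) (hY : Y.PosDef) :
    HasSum (fun v : ℤ × ℤ × ℤ =>
        A !![(v.1 : ℝ) / p, (v.2.1 : ℝ) / (2 * p); (v.2.1 : ℝ) / (2 * p), (v.2.2 : ℝ)] Y *
          phase v x₁ x₂ x₃)
      (F (mkZ !![p * x₁, p * x₂; p * x₂, x₃] Y)) := by
  refine ((injective_mul_fst_snd hp).hasSum_iff fun v hv => ?_).1
    ((hF.hasSum_phase (p * x₁) (p * x₂) x₃ hYs hY).congr_fun fun c => ?_)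
  · rw [coeff_div_eq_zero hA0 hp Y hv, zero_mul]
  · simp only [Function.comp_apply, Prod.map, id, halfIntMat_eq_div hp, phase]
    push_cast
    ring_nf

theorem hasSum_average {p : ℕ} (hp : 0 < p) (x₁ x₂ x₃ : ℝ) {Y : M2R} (hYs : Y.IsSymm)
    (hY : Y.PosDef) :
    HasSum (fun v : ℤ × ℤ × ℤ =>
        A !![(p : ℝ) * v.1, (v.2.1 : ℝ) / 2; (v.2.1 : ℝ) / 2, (v.2.2 : ℝ)] Y * phase v x₁ x₂ x₃)
      ((p : ℂ)⁻¹ * ∑ a : Fin p, F (mkZ !![(x₁ + a) / p, x₂; x₂, x₃] Y)) := by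
  have hpC : (p : ℂ) ≠ 0 := by exact_mod_cast hp.ne'
  have hsplit : ∀ (c : ℤ × ℤ × ℤ) (a : Fin p), phase c ((x₁ + a) / p) x₂ x₃ =
      phase c (x₁ / p) x₂ x₃ * exp (2 * π * I * c.1 * a / p) := fun c a => by
    rw [phase, phase, ← Complex.exp_add]
    push_cast
    ring_nf
  have hsum := (hasSum_sum (s := Finset.univ) fun (a : Fin p) _ =>
    hF.hasSum_phase ((x₁ + a) / p) x₂ x₃ hYs hY).mul_left (p : ℂ)⁻¹
  simp only [hsplit, ← mul_assoc, ← Finset.mul_sum, mul_left_comm (p : ℂ)⁻¹,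
    inv_mul_sum_exp_two_pi_I_mul_div hp, mul_ite, mul_one, mul_zero] at hsum
  refine (((injective_mul_fst hp).hasSum_iff fun v hv => ?_).2 hsum).congr_fun fun v => ?_
  · rw [if_neg]
    rintro ⟨a, ha⟩
    exact hv ⟨(a, v.2), by simp [← ha]⟩
  · simp only [Function.comp_apply, Prod.map, id, dvd_mul_right, if_true, halfIntMat_mul, phase]
    push_cast
    field_simp

end HasFourierExpansion

/-- The coefficients of `F|T_p•` in the coordinates of `hasSum_TpUp`. -/
def heckeUpCoeff (k : ℤ) (A : M2R → M2R → ℂ) (p : ℕ) (y₁ y₂ y₃ : ℝ) (v : ℤ × ℤ × ℤ) : ℂ :=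
  (p : ℂ) ^ (k - 1) *
      A !![(v.1 : ℝ) / p, (v.2.1 : ℝ) / (2 * p); (v.2.1 : ℝ) / (2 * p), (v.2.2 : ℝ)]
        !![p * y₁, p * y₂; p * y₂, y₃] +
    A !![(p : ℝ) * v.1, (v.2.1 : ℝ) / 2; (v.2.1 : ℝ) / 2, (v.2.2 : ℝ)] !![y₁ / p, y₂; y₂, y₃]

def heckeLowCoeff (k : ℤ) (A : M2R → M2R → ℂ) (p : ℕ) (y₁ y₂ y₃ : ℝ) (v : ℤ × ℤ × ℤ) : ℂ :=
  (p : ℂ) ^ (k - 1) *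
      A !![(v.1 : ℝ), (v.2.1 : ℝ) / (2 * p); (v.2.1 : ℝ) / (2 * p), (v.2.2 : ℝ) / p]
        !![y₁, p * y₂; p * y₂, p * y₃] +
    A !![(v.1 : ℝ), (v.2.1 : ℝ) / 2; (v.2.1 : ℝ) / 2, (p : ℝ) * v.2.2] !![y₁, y₂; y₂, y₃ / p]

def revTriple : ℤ × ℤ × ℤ ≃ ℤ × ℤ × ℤ where
  toFun v := (v.2.2, v.2.1, v.1)
  invFun v := (v.2.2, v.2.1, v.1)
  left_inv _ := rfl
  right_inv _ := rfl

lemma swap2_halfIntMat (n r m : ℤ) : swap2 (halfIntMat n r m) = halfIntMat m r n := by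
  simp [halfIntMat]

lemma phase_revTriple (v : ℤ × ℤ × ℤ) (x₁ x₂ x₃ : ℝ) :
    phase (revTriple v) x₃ x₂ x₁ = phase v x₁ x₂ x₃ := by
  simp only [phase, revTriple, Equiv.coe_fn_mk]
  ring_nf

lemma HasFourierExpansion.comp_swap2 {F : M2C → ℂ} {A : M2R → M2R → ℂ}
    (hF : HasFourierExpansion F A) :
    HasFourierExpansion (F ∘ swap2) (fun M Y => A (swap2 M) (swap2 Y)) := by
  intro X Y hX hYs hY
  have h := hF (swap2 X) (swap2 Y) (hX.submatrix _) (hYs.submatrix _)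
    (hY.submatrix (Equiv.injective _))
  rw [Function.comp_apply, swap2_mkZ, ← revTriple.hasSum_iff]
  refine h.congr_fun fun c => ?_
  simp only [Function.comp_apply, revTriple, Equiv.coe_fn_mk, swap2_halfIntMat]
  simp only [swap2, submatrix_apply, Equiv.swap_apply_left, Equiv.swap_apply_right, hX.apply 0 1]
  ring_nf

lemma coeff_swap2_eq_zero {A : M2R → M2R → ℂ}
    (hA0 : ∀ M Y : M2R, ¬ IsHalfIntegral M → A M Y = 0) (M Y : M2R) (hM : ¬ IsHalfIntegral M) :
    A (swap2 M) (swap2 Y) = 0 := by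
  refine hA0 _ _ fun ⟨n, r, m, h⟩ => hM ⟨m, r, n, ?_⟩
  rw [← swap2_swap2 M, h, swap2_halfIntMat]

lemma summable_norm_coeff_swap2 {A : M2R → M2R → ℂ} {Y : M2R}
    (habs : Summable fun c : ℤ × ℤ × ℤ => ‖A (halfIntMat c.1 c.2.1 c.2.2) (swap2 Y)‖) :
    Summable fun c : ℤ × ℤ × ℤ => ‖A (swap2 (halfIntMat c.1 c.2.1 c.2.2)) (swap2 Y)‖ :=
  (revTriple.summable_iff.2 habs).congr fun c => by
    simp [revTriple, swap2_halfIntMat]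

lemma heckeLowCoeff_eq_heckeUpCoeff (k : ℤ) (A : M2R → M2R → ℂ) (p : ℕ) (y₁ y₂ y₃ : ℝ)
    (v : ℤ × ℤ × ℤ) :
    heckeLowCoeff k A p y₁ y₂ y₃ v =
      heckeUpCoeff k (fun M Y => A (swap2 M) (swap2 Y)) p y₃ y₂ y₁ (revTriple v) := by
  simp [heckeLowCoeff, heckeUpCoeff, revTriple]

lemma pos_of_mul_sq_lt_mul {c a b d : ℝ} (hc : 0 ≤ c) (ha : 0 < a) (h : c * b ^ 2 < a * d) :
    0 < d :=
  pos_of_mul_pos_right ((mul_nonneg hc (sq_nonneg b)).trans_lt h) ha.le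

section HeckeCoefficients

variable {k : ℤ} {A : M2R → M2R → ℂ} {p : ℕ} (hp : 0 < p) {y₁ y₂ y₃ : ℝ} (hy₁ : 0 < y₁)
  (hy : (p : ℝ) * y₂ ^ 2 < y₁ * y₃)
include hp hy₁ hy

lemma posDef_mul_fst : (!![p * y₁, p * y₂; p * y₂, y₃] : M2R).PosDef :=
  posDef_fin_two_iff.2 ⟨by positivity, by nlinarith [mul_lt_mul_of_pos_left hy (Nat.cast_pos.2 hp)]⟩

lemma posDef_div_fst : (!![y₁ / p, y₂; y₂, y₃] : M2R).PosDef := by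
  refine posDef_fin_two_iff.2 ⟨by positivity, ?_⟩
  rw [div_mul_eq_mul_div, lt_div_iff₀ (by positivity)]
  linarith

theorem summable_norm_heckeUpCoeff
    (hA0 : ∀ M Y : M2R, ¬ IsHalfIntegral M → A M Y = 0)
    (habs : ∀ Y : M2R, Y.IsSymm → Y.PosDef →
      Summable fun c : ℤ × ℤ × ℤ => ‖A (halfIntMat c.1 c.2.1 c.2.2) Y‖) :
    Summable fun v => ‖heckeUpCoeff k A p y₁ y₂ y₃ v‖ := by
  have h₁ := summable_norm_coeff_div hA0 hp
    (habs _ (isSymm_of_fin_two _ _ _) (posDef_mul_fst hp hy₁ hy))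
  have h₂ := summable_norm_coeff_mul hp
    (habs _ (isSymm_of_fin_two _ _ _) (posDef_div_fst hp hy₁ hy))
  refine ((h₁.mul_left ‖(p : ℂ) ^ (k - 1)‖).add h₂).of_nonneg_of_le (fun _ => norm_nonneg _)
    fun v => ?_
  exact (norm_add_le _ _).trans_eq (by rw [norm_mul])

theorem hasSum_TpUp (hk : Even k) {F : M2C → ℂ} (hF : HasFourierExpansion F A)
    (hA0 : ∀ M Y : M2R, ¬ IsHalfIntegral M → A M Y = 0) (x₁ x₂ x₃ : ℝ) :
    HasSum (fun v => heckeUpCoeff k A p y₁ y₂ y₃ v * phase v x₁ x₂ x₃)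
      (TpUp k p F (mkZ !![x₁, √p * x₂; √p * x₂, x₃] !![y₁, √p * y₂; √p * y₂, y₃])) := by
  rw [TpUp_mkZ hk hp]
  refine (((hF.hasSum_scale hA0 hp x₁ x₂ x₃ (isSymm_of_fin_two _ _ _)
    (posDef_mul_fst hp hy₁ hy)).mul_left _).add
    (hF.hasSum_average hp x₁ x₂ x₃ (isSymm_of_fin_two _ _ _) (posDef_div_fst hp hy₁ hy))).congr_fun
    fun v => ?_
  simp only [heckeUpCoeff]
  ring

theorem summable_norm_heckeLowCoeff
    (hA0 : ∀ M Y : M2R, ¬ IsHalfIntegral M → A M Y = 0)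
    (habs : ∀ Y : M2R, Y.IsSymm → Y.PosDef →
      Summable fun c : ℤ × ℤ × ℤ => ‖A (halfIntMat c.1 c.2.1 c.2.2) Y‖) :
    Summable fun v => ‖heckeLowCoeff k A p y₁ y₂ y₃ v‖ := by
  have hy₃ := pos_of_mul_sq_lt_mul (Nat.cast_nonneg p) hy₁ hy
  have h := summable_norm_heckeUpCoeff (k := k) hp hy₃ (by linarith : (p : ℝ) * y₂ ^ 2 < y₃ * y₁)
    (coeff_swap2_eq_zero hA0) fun Y hYs hY =>
      summable_norm_coeff_swap2 (habs _ (hYs.submatrix _) (hY.submatrix (Equiv.injective _)))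
  exact (revTriple.summable_iff.2 h).congr fun v => by
    rw [Function.comp_apply, heckeLowCoeff_eq_heckeUpCoeff]

theorem hasSum_TpLow (hk : Even k) {F : M2C → ℂ} (hF : HasFourierExpansion F A)
    (hA0 : ∀ M Y : M2R, ¬ IsHalfIntegral M → A M Y = 0) (x₁ x₂ x₃ : ℝ) :
    HasSum (fun v => heckeLowCoeff k A p y₁ y₂ y₃ v * phase v x₁ x₂ x₃)
      (TpLow k p F (mkZ !![x₁, √p * x₂; √p * x₂, x₃] !![y₁, √p * y₂; √p * y₂, y₃])) := by
  have hy₃ := pos_of_mul_sq_lt_mul (Nat.cast_nonneg p) hy₁ hy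
  rw [TpLow_eq_TpUp_comp_swap2 k hp, swap2_mkZ, swap2_of, swap2_of]
  refine (revTriple.hasSum_iff.2 (hasSum_TpUp hp hy₃ (by linarith : (p : ℝ) * y₂ ^ 2 < y₃ * y₁)
    hk hF.comp_swap2 (coeff_swap2_eq_zero hA0) x₃ x₂ x₁)).congr_fun
    fun v => ?_
  rw [Function.comp_apply, heckeLowCoeff_eq_heckeUpCoeff, phase_revTriple]

theorem heckeUpCoeff_eq_heckeLowCoeff (hk : Even k) {F : M2C → ℂ} (hF : HasFourierExpansion F A)
    (hA0 : ∀ M Y : M2R, ¬ IsHalfIntegral M → A M Y = 0)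
    (habs : ∀ Y : M2R, Y.IsSymm → Y.PosDef →
      Summable fun c : ℤ × ℤ × ℤ => ‖A (halfIntMat c.1 c.2.1 c.2.2) Y‖)
    (H : ∀ Z ∈ SiegelH2, TpUp k p F Z = TpLow k p F Z) (v : ℤ × ℤ × ℤ) :
    heckeUpCoeff k A p y₁ y₂ y₃ v = heckeLowCoeff k A p y₁ y₂ y₃ v := by
  have hdiff : ∀ x : ℝ × ℝ × ℝ, HasSum (fun v => (heckeUpCoeff k A p y₁ y₂ y₃ v -
      heckeLowCoeff k A p y₁ y₂ y₃ v) * phase v x.1 x.2.1 x.2.2) 0 := fun x => by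
    have hZ := mkZ_mem_siegelH2 (isSymm_of_fin_two x.1 (√p * x.2.1) x.2.2)
      (isSymm_of_fin_two _ _ _) (posDef_sqrt_mul hy₁ hy)
    have h := (hasSum_TpUp hp hy₁ hy hk hF hA0 x.1 x.2.1 x.2.2).sub
      (hasSum_TpLow hp hy₁ hy hk hF hA0 x.1 x.2.1 x.2.2)
    rwa [H _ hZ, sub_self, ← funext fun v => sub_mul _ _ (phase v x.1 x.2.1 x.2.2)] at h
  have hsum :
      Summable fun v => ‖heckeUpCoeff k A p y₁ y₂ y₃ v - heckeLowCoeff k A p y₁ y₂ y₃ v‖ :=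
    ((summable_norm_heckeUpCoeff hp hy₁ hy hA0 habs).add
      (summable_norm_heckeLowCoeff hp hy₁ hy hA0 habs)).of_nonneg_of_le
      (fun _ => norm_nonneg _) fun _ => norm_sub_le _ _
  exact sub_eq_zero.1 (summablyIndependent_phase _ hsum hdiff v)

end HeckeCoefficients

theorem TpUp_eq_TpLow_of_heckeUpCoeff_eq {k : ℤ} (hk : Even k) {F : M2C → ℂ}
    {A : M2R → M2R → ℂ} (hF : HasFourierExpansion F A)
    (hA0 : ∀ M Y : M2R, ¬ IsHalfIntegral M → A M Y = 0) {p : ℕ} (hp : 0 < p)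
    (H : ∀ y₁ y₂ y₃ : ℝ, 0 < y₁ → (p : ℝ) * y₂ ^ 2 < y₁ * y₃ →
      ∀ v, heckeUpCoeff k A p y₁ y₂ y₃ v = heckeLowCoeff k A p y₁ y₂ y₃ v)
    {Z : M2C} (hZ : Z ∈ SiegelH2) : TpUp k p F Z = TpLow k p F Z := by
  obtain ⟨x₁, x₂, x₃, y₁, y₂, y₃, hy₁, hy, rfl⟩ := exists_eq_mkZ_sqrt hZ hp
  refine (hasSum_TpUp hp hy₁ hy hk hF hA0 x₁ x₂ x₃).unique
    ((hasSum_TpLow hp hy₁ hy hk hF hA0 x₁ x₂ x₃).congr_fun fun v => ?_)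
  rw [H y₁ y₂ y₃ hy₁ hy v]

theorem fourier_coefficient_criterion_general (k : ℤ) (hk : Even k) (F : M2C → ℂ)
    (A : M2R → M2R → ℂ)
    (hA0 : ∀ M Y : M2R, ¬ IsHalfIntegral M → A M Y = 0)
    (hFour : ∀ X Y : M2R, X.IsSymm → Y.IsSymm → Y.PosDef →
      HasSum (fun c : ℤ × ℤ × ℤ =>
        A (halfIntMat c.1 c.2.1 c.2.2) Y *
          Complex.exp (2 * (Real.pi : ℂ) * Complex.I *
            ((c.1 : ℂ) * X 0 0 + (c.2.1 : ℂ) * X 0 1 + (c.2.2 : ℂ) * X 1 1)))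
        (F (mkZ X Y)))
    (habs : ∀ X Y : M2R, X.IsSymm → Y.IsSymm → Y.PosDef →
      Summable (fun c : ℤ × ℤ × ℤ => ‖A (halfIntMat c.1 c.2.1 c.2.2) Y‖)) :
    (∀ p : ℕ, p.Prime → ∀ Z ∈ SiegelH2, TpUp k p F Z = TpLow k p F Z) ↔
    (∀ p : ℕ, p.Prime → ∀ n r m : ℤ, ∀ y₁ y₂ y₃ : ℝ,
      (!![y₁, y₂; y₂, y₃] : M2R).PosDef → (p : ℝ) * y₂ ^ 2 < y₁ * y₃ →
      (p : ℂ) ^ (k - 1) *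
          A !![(n:ℝ)/(p:ℝ), (r:ℝ)/(2*(p:ℝ)); (r:ℝ)/(2*(p:ℝ)), (m:ℝ)]
            !![(p:ℝ)*y₁, (p:ℝ)*y₂; (p:ℝ)*y₂, y₃]
        + A !![(p:ℝ)*(n:ℝ), (r:ℝ)/2; (r:ℝ)/2, (m:ℝ)] !![y₁/(p:ℝ), y₂; y₂, y₃]
      = (p : ℂ) ^ (k - 1) *
          A !![(n:ℝ), (r:ℝ)/(2*(p:ℝ)); (r:ℝ)/(2*(p:ℝ)), (m:ℝ)/(p:ℝ)]
            !![y₁, (p:ℝ)*y₂; (p:ℝ)*y₂, (p:ℝ)*y₃]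
        + A !![(n:ℝ), (r:ℝ)/2; (r:ℝ)/2, (p:ℝ)*(m:ℝ)] !![y₁, y₂; y₂, y₃/(p:ℝ)]) := by
  constructor
  · intro H p hp n r m y₁ y₂ y₃ hY hy
    exact heckeUpCoeff_eq_heckeLowCoeff hp.pos (posDef_fin_two_iff.1 hY).1 hy hk hFour hA0
      (fun Y => habs 0 Y isSymm_zero) (H p hp) (n, r, m)
  · intro H p hp Z hZ
    refine TpUp_eq_TpLow_of_heckeUpCoeff_eq hk hFour hA0 hp.pos
      (fun y₁ y₂ y₃ hy₁ hy v => H p hp v.1 v.2.1 v.2.2 y₁ y₂ y₃ ?_ hy) hZ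
    have hp1 : (1 : ℝ) ≤ p := by exact_mod_cast hp.one_lt.le
    exact posDef_fin_two_iff.2 ⟨hy₁, (le_mul_of_one_le_left (sq_nonneg y₂) hp1).trans_lt hy⟩

/-- for a `Γ₂`-modular function with an absolutely convergent Fourier
expansion, strong symmetry is equivalent to the identity among Fourier coefficients. -/
theorem fourier_coefficient_criterion (k : ℤ) (hk : Even k) (F : M2C → ℂ)
    (hFc : ContinuousOn F SiegelH2)
    (hF : ∀ γ ∈ Sp2Z, ∀ Z ∈ SiegelH2, slashOp k γ F Z = F Z)
    (A : M2R → M2R → ℂ)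
    (hA0 : ∀ M Y : M2R, ¬ IsHalfIntegral M → A M Y = 0)
    (hFour : ∀ X Y : M2R, X.IsSymm → Y.IsSymm → Y.PosDef →
      HasSum (fun c : ℤ × ℤ × ℤ =>
        A (halfIntMat c.1 c.2.1 c.2.2) Y *
          Complex.exp (2 * (Real.pi : ℂ) * Complex.I *
            ((c.1 : ℂ) * X 0 0 + (c.2.1 : ℂ) * X 0 1 + (c.2.2 : ℂ) * X 1 1)))
        (F (mkZ X Y)))
    (habs : ∀ X Y : M2R, X.IsSymm → Y.IsSymm → Y.PosDef →
      Summable (fun c : ℤ × ℤ × ℤ => ‖A (halfIntMat c.1 c.2.1 c.2.2) Y‖)) :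
    (∀ p : ℕ, p.Prime → ∀ Z ∈ SiegelH2, TpUp k p F Z = TpLow k p F Z) ↔
    (∀ p : ℕ, p.Prime → ∀ n r m : ℤ, ∀ y₁ y₂ y₃ : ℝ,
      (!![y₁, y₂; y₂, y₃] : M2R).PosDef → (p : ℝ) * y₂ ^ 2 < y₁ * y₃ →
      (p : ℂ) ^ (k - 1) *
          A !![(n:ℝ)/(p:ℝ), (r:ℝ)/(2*(p:ℝ)); (r:ℝ)/(2*(p:ℝ)), (m:ℝ)]
            !![(p:ℝ)*y₁, (p:ℝ)*y₂; (p:ℝ)*y₂, y₃]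
        + A !![(p:ℝ)*(n:ℝ), (r:ℝ)/2; (r:ℝ)/2, (m:ℝ)] !![y₁/(p:ℝ), y₂; y₂, y₃]
      = (p : ℂ) ^ (k - 1) *
          A !![(n:ℝ), (r:ℝ)/(2*(p:ℝ)); (r:ℝ)/(2*(p:ℝ)), (m:ℝ)/(p:ℝ)]
            !![y₁, (p:ℝ)*y₂; (p:ℝ)*y₂, (p:ℝ)*y₃]
        + A !![(n:ℝ), (r:ℝ)/2; (r:ℝ)/2, (p:ℝ)*(m:ℝ)] !![y₁, y₂; y₂, y₃/(p:ℝ)]) :=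
  fourier_coefficient_criterion_general k hk F A hA0 hFour habs

end
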